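/- arXiv:1708.01763 — 2 statements merged into one kernel-verified Lean document; each statement's English description precedes it below -/
import Mathlib

section
/- Let Γ be a group, Λ ≤ Γ a subgroup, and ψ : Γ → ℝ a function of conditionally negative type that is unbounded on Λ. Let t > 0 and let (π, H) be a unitary representation of Γ with a cyclic unit vector ξ ∈ H (i.e. the closed linear span of {π(γ)ξ : γ ∈ Γ} is H) satisfying ⟨ξ, π(γ)ξ⟩ = exp(−t ψ(γ)) for all γ ∈ Γ. Then the restriction of π to Λ is weakly mixing: for every ε > 0 and every finite list of vectors η_1, …, η_n ∈ H there exists ρ ∈ Λ such that |⟨η_i, π(ρ) η_j⟩| ≤ ε for all 1 ≤ i, j ≤ n. -/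
open scoped InnerProductSpace ComplexConjugate ComplexOrder BigOperators

section Defs

variable {Γ : Type} [Group Γ]

/-- A complex-valued function of positive type on a group. -/
def IsPosType (φ : Γ → ℂ) : Prop :=
  ∀ (n : ℕ), 1 ≤ n → ∀ (γ : Fin n → Γ) (c : Fin n → ℂ),
    0 ≤ ∑ i, ∑ j, conj (c i) * c j * φ ((γ i)⁻¹ * γ j)

/-- A real-valued function of positive type on a group. -/
def IsRealPosType (φ : Γ → ℝ) : Prop :=
  (∀ γ : Γ, φ γ⁻¹ = φ γ) ∧
  ∀ (n : ℕ), 1 ≤ n → ∀ (γ : Fin n → Γ) (c : Fin n → ℝ),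
    0 ≤ ∑ i, ∑ j, c i * c j * φ ((γ i)⁻¹ * γ j)

/-- A complex-valued function of conditionally negative type on a group. -/
def IsCondNegType (ψ : Γ → ℂ) : Prop :=
  ψ 1 = 0 ∧ (∀ γ : Γ, ψ γ⁻¹ = conj (ψ γ)) ∧
  ∀ (n : ℕ), 2 ≤ n → ∀ (γ : Fin n → Γ) (c : Fin n → ℂ), (∑ i, c i) = 0 →
    ∑ i, ∑ j, conj (c i) * c j * ψ ((γ i)⁻¹ * γ j) ≤ 0

/-- A real-valued function of conditionally negative type on a group. -/
def IsRealCondNegType (ψ : Γ → ℝ) : Prop :=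
  ψ 1 = 0 ∧ (∀ γ : Γ, ψ γ⁻¹ = ψ γ) ∧
  ∀ (n : ℕ), 2 ≤ n → ∀ (γ : Fin n → Γ) (c : Fin n → ℝ), (∑ i, c i) = 0 →
    ∑ i, ∑ j, c i * c j * ψ ((γ i)⁻¹ * γ j) ≤ 0

/-- A function on Γ is Δ-(bi-)invariant if it is unchanged under left and right
multiplication by elements of Δ. -/
def IsInvariantUnder {α : Type*} (Δ : Subgroup Γ) (ψ : Γ → α) : Prop :=
  ∀ d₀ ∈ Δ, ∀ d₁ ∈ Δ, ∀ γ : Γ, ψ (d₀ * γ * d₁) = ψ γ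

/-- The triple Δ ≤ Λ ≤ Γ has property (T): every unitary representation of Γ with
almost invariant Δ-invariant unit vectors has a Λ-invariant unit vector. -/
def HasPropertyT (Δ Λ : Subgroup Γ) : Prop :=
  ∀ (H : Type) [NormedAddCommGroup H] [InnerProductSpace ℂ H] [CompleteSpace H]
    (π : Γ →* (H ≃ₗᵢ[ℂ] H)),
    (∀ (F : Finset Γ) (ε : ℝ), 0 < ε →
      ∃ ξ : H, ‖ξ‖ = 1 ∧ (∀ d ∈ Δ, π d ξ = ξ) ∧ ∀ γ ∈ F, ‖π γ ξ - ξ‖ ≤ ε) →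
    ∃ η : H, ‖η‖ = 1 ∧ ∀ l ∈ Λ, π l η = η

end Defs

/-!
Conditionally negative type gives `ψ (x y) ≤ 2 ψ x + 2 ψ y`, so `ψ (a ρ b) ≥ ψ ρ / 4 - C(a, b)`:
along the filter of `ρ ∈ Λ` with `ψ ρ → ∞`, every coefficient
`⟪π a ξ, π ρ (π b ξ)⟫ = exp (-t ψ (a⁻¹ ρ b))` tends to `0`. Coefficients vanishing along a filter
form closed subspaces in each variable, so this spreads from the cyclic orbit of `ξ` to all of `H`.
-/

open Filter Topology

namespace IsRealCondNegType

variable {Γ : Type} [Group Γ] {ψ : Γ → ℝ}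

lemma nonneg (hψ : IsRealCondNegType ψ) (g : Γ) : 0 ≤ ψ g := by
  have h := hψ.2.2 2 le_rfl ![1, g] ![1, -1] (by simp)
  simpa [Fin.sum_univ_two, hψ.1, hψ.2.1] using h

lemma map_mul_le (hψ : IsRealCondNegType ψ) (x y : Γ) : ψ (x * y) ≤ 2 * ψ x + 2 * ψ y := by
  have h := hψ.2.2 3 (by norm_num) ![1, x⁻¹, y] ![-2, 1, 1] (by simp [Fin.sum_univ_three]; norm_num)
  have hyx : ψ (y⁻¹ * x⁻¹) = ψ (x * y) := by rw [← mul_inv_rev, hψ.2.1]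
  simp only [Fin.sum_univ_three, Matrix.cons_val_zero, Matrix.cons_val_one, Matrix.cons_val, hψ.1,
    hψ.2.1, hyx, inv_one, inv_inv, one_mul, mul_one, mul_inv_cancel, inv_mul_cancel] at h
  linarith

lemma tendsto_atTop_mul_mul (hψ : IsRealCondNegType ψ) {l : Filter Γ} (h : Tendsto ψ l atTop)
    (a b : Γ) : Tendsto (fun g => ψ (a * g * b)) l atTop := by
  have hle : ∀ g, (ψ g - 2 * ψ a⁻¹ - 4 * ψ b⁻¹) / 4 ≤ ψ (a * g * b) := fun g => by
    have h₁ := hψ.map_mul_le a⁻¹ (a * g * b * b⁻¹)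
    have h₂ := hψ.map_mul_le (a * g * b) b⁻¹
    rw [show a⁻¹ * (a * g * b * b⁻¹) = g by group] at h₁
    linarith
  refine tendsto_atTop_mono hle (Tendsto.atTop_div_const (by norm_num) ?_)
  exact tendsto_atTop_add_const_right _ _ (tendsto_atTop_add_const_right _ _ h)

end IsRealCondNegType

section VanishingCoefficients

variable {ι R S E F : Type*}

def LinearMap.tendstoZeroSubmodule [Semiring R] [Semiring S] {σ : R →+* S} [AddCommMonoid E]
    [Module R E] [AddCommMonoid F] [Module S F] [TopologicalSpace F] [ContinuousAdd F]
    [ContinuousConstSMul S F] (φ : ι → E →ₛₗ[σ] F) (l : Filter ι) : Submodule R E where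
  carrier := {x | Tendsto (φ · x) l (𝓝 0)}
  add_mem' {x y} hx hy := by simpa using hx.add hy
  zero_mem' := by simpa using tendsto_const_nhds
  smul_mem' c x hx := by simpa using hx.const_smul (σ c)

lemma LinearMap.tendsto_of_span_dense {𝕜 𝕜' : Type*} [NormedField 𝕜] [NormedField 𝕜']
    {σ : 𝕜 →+* 𝕜'} [SeminormedAddCommGroup E] [NormedSpace 𝕜 E] [SeminormedAddCommGroup F]
    [NormedSpace 𝕜' F] (φ : ι → E →ₛₗ[σ] F) {K : NNReal} (hφ : ∀ i, LipschitzWith K (φ i))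
    (l : Filter ι) {s : Set E} (hs : (Submodule.span 𝕜 s).topologicalClosure = ⊤)
    (h : ∀ x ∈ s, Tendsto (φ · x) l (𝓝 0)) (x : E) : Tendsto (φ · x) l (𝓝 0) := by
  have hclosed : IsClosed (tendstoZeroSubmodule φ l : Set E) :=
    (LipschitzWith.uniformEquicontinuous _ K hφ).equicontinuous.isClosed_setOfPred_tendsto
      continuous_const
  have htop : tendstoZeroSubmodule φ l = ⊤ :=
    eq_top_iff.2 <| hs ▸ Submodule.topologicalClosure_minimal _ (Submodule.span_le.2 h) hclosed
  exact show x ∈ tendstoZeroSubmodule φ l from htop ▸ Submodule.mem_top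

variable {𝕜 H : Type*} [RCLike 𝕜] [NormedAddCommGroup H] [InnerProductSpace 𝕜 H]

lemma tendsto_inner_apply_of_span_dense (T : ι → H ≃ₗᵢ[𝕜] H) (l : Filter ι) {s : Set H}
    (hs : (Submodule.span 𝕜 s).topologicalClosure = ⊤)
    (h : ∀ x ∈ s, ∀ y ∈ s, Tendsto (fun i => ⟪x, T i y⟫_𝕜) l (𝓝 0)) (x y : H) :
    Tendsto (fun i => ⟪x, T i y⟫_𝕜) l (𝓝 0) := by
  have hright : ∀ x ∈ s, ∀ y, Tendsto (fun i => ⟪x, T i y⟫_𝕜) l (𝓝 0) := fun x hx =>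
    LinearMap.tendsto_of_span_dense (fun i => (innerₛₗ 𝕜 x).comp (T i).toLinearMap) (K := ‖x‖₊)
      (fun i => LipschitzWith.of_dist_le_mul fun a b => by
        simpa [dist_eq_norm, ← inner_sub_right, ← map_sub] using
          norm_inner_le_norm x (T i (a - b)))
      l hs (h x hx)
  exact LinearMap.tendsto_of_span_dense (fun i => (innerₛₗ 𝕜).flip (T i y)) (K := ‖y‖₊)
    (fun i => LipschitzWith.of_dist_le_mul fun a b => by
      simpa [dist_eq_norm, ← inner_sub_left, mul_comm] using
        norm_inner_le_norm (𝕜 := 𝕜) (a - b) (T i y))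
    l hs (fun x hx => hright x hx y) x

end VanishingCoefficients

lemma inner_map_apply_map_eq {G 𝕜 H : Type*} [Group G] [RCLike 𝕜] [NormedAddCommGroup H]
    [InnerProductSpace 𝕜 H] (π : G →* (H ≃ₗᵢ[𝕜] H)) (a g b : G) (x y : H) :
    ⟪π a x, π g (π b y)⟫_𝕜 = ⟪x, π (a⁻¹ * g * b) y⟫_𝕜 := by
  rw [← (π a).inner_map_map x, map_mul, map_mul, map_inv]
  simp [LinearIsometryEquiv.coe_mul]

lemma neBot_comap_atTop_inf_principal {α β : Type*} [Preorder β] [IsDirected β (· ≤ ·)]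
    [Nonempty β] {f : α → β} {s : Set α} (h : ∀ C, ∃ x ∈ s, C ≤ f x) :
    (comap f atTop ⊓ 𝓟 s).NeBot := by
  refine inf_principal_neBot_iff.2 fun U hU => ?_
  obtain ⟨V, hV, hVU⟩ := mem_comap.1 hU
  obtain ⟨C, hC⟩ := mem_atTop_sets.1 hV
  obtain ⟨x, hxs, hCx⟩ := h C
  exact ⟨x, hVU (hC _ hCx), hxs⟩

theorem stmt9_general (Γ : Type) [Group Γ] (Λ : Subgroup Γ)
    (ψ : Γ → ℝ) (hψ : IsRealCondNegType ψ)
    (hub : ¬ ∃ C : ℝ, ∀ l ∈ Λ, |ψ l| ≤ C)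
    (t : ℝ) (ht : 0 < t)
    (H : Type) [NormedAddCommGroup H] [InnerProductSpace ℂ H]
    (π : Γ →* (H ≃ₗᵢ[ℂ] H)) (ξ : H)
    (hcyc : (Submodule.span ℂ (Set.range fun γ : Γ => π γ ξ)).topologicalClosure = ⊤)
    (hcorr : ∀ γ : Γ, ⟪ξ, π γ ξ⟫_ℂ = (Real.exp (-t * ψ γ) : ℂ)) :
    ∀ ε > (0 : ℝ), ∀ (n : ℕ) (η : Fin n → H),
      ∃ ρ ∈ Λ, ∀ i j : Fin n, ‖⟪η i, π ρ (η j)⟫_ℂ‖ ≤ ε := by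
  intro ε hε n η
  let l : Filter Γ := comap ψ atTop ⊓ 𝓟 Λ
  have hl : l.NeBot := neBot_comap_atTop_inf_principal fun C => by
    simp only [not_exists, not_forall, not_le] at hub
    obtain ⟨g, hg, hCg⟩ := hub C
    exact ⟨g, hg, (abs_of_nonneg (hψ.nonneg g) ▸ hCg).le⟩
  have hgen : ∀ a b : Γ, Tendsto (fun ρ => ⟪π a ξ, π ρ (π b ξ)⟫_ℂ) l (𝓝 0) := fun a b => by
    simp_rw [inner_map_apply_map_eq, hcorr]
    have hψl : Tendsto ψ l atTop := tendsto_comap.mono_left inf_le_left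
    have := (Complex.continuous_ofReal.tendsto 0).comp <| Real.tendsto_exp_atBot.comp <|
      (hψ.tendsto_atTop_mul_mul hψl a⁻¹ b).const_mul_atTop_of_neg (neg_lt_zero.2 ht)
    simpa only [Function.comp_def, Complex.ofReal_zero, neg_mul] using this
  have hmix := tendsto_inner_apply_of_span_dense π l hcyc (by
    rintro _ ⟨a, rfl⟩ _ ⟨b, rfl⟩
    exact hgen a b)
  have hΛ : ∀ᶠ ρ in l, ρ ∈ Λ := mem_inf_of_right (mem_principal_self _)
  have hsmall : ∀ᶠ ρ in l, ρ ∈ Λ ∧ ∀ i j, ‖⟪η i, π ρ (η j)⟫_ℂ‖ ≤ ε :=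
    hΛ.and <| eventually_all.2 fun i => eventually_all.2 fun j =>
      (tendsto_zero_iff_norm_tendsto_zero.1 (hmix (η i) (η j))).eventually (ge_mem_nhds hε)
  exact hsmall.exists

/-- If ψ is of conditionally negative type and unbounded on Λ, then the GNS
representation of exp(-tψ) restricted to Λ is weakly mixing. -/
theorem stmt9 (Γ : Type) [Group Γ] (Λ : Subgroup Γ)
    (ψ : Γ → ℝ) (hψ : IsRealCondNegType ψ)
    (hub : ¬ ∃ C : ℝ, ∀ l ∈ Λ, |ψ l| ≤ C)
    (t : ℝ) (ht : 0 < t)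
    (H : Type) [NormedAddCommGroup H] [InnerProductSpace ℂ H] [CompleteSpace H]
    (π : Γ →* (H ≃ₗᵢ[ℂ] H)) (ξ : H) (hξ : ‖ξ‖ = 1)
    (hcyc : (Submodule.span ℂ (Set.range fun γ : Γ => π γ ξ)).topologicalClosure = ⊤)
    (hcorr : ∀ γ : Γ, ⟪ξ, π γ ξ⟫_ℂ = (Real.exp (-t * ψ γ) : ℂ)) :
    ∀ ε > (0 : ℝ), ∀ (n : ℕ) (η : Fin n → H),
      ∃ ρ ∈ Λ, ∀ i j : Fin n, ‖⟪η i, π ρ (η j)⟫_ℂ‖ ≤ ε :=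
  stmt9_general Γ Λ ψ hψ hub t ht H π ξ hcyc hcorr
end

section
/- Let Γ be a group, Δ ≤ Γ a subgroup, and ψ : Γ → ℝ a function. The following are equivalent: (a) ψ is a Δ-invariant function of conditionally negative type; (b) there exist a real Hilbert space H, an orthogonal representation π of Γ on H, and a cocycle b for π with b(δ) = 0 for all δ ∈ Δ, such that {b(γ) : γ ∈ Γ} has dense linear span in H and ψ(γ) = ‖b(γ)‖² for all γ ∈ Γ. Moreover, in that case ψ(ρ⁻¹γ) = ‖b(γ) − b(ρ)‖² for all γ, ρ ∈ Γ. -/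
open scoped InnerProductSpace ComplexConjugate ComplexOrder BigOperators

/-
On the augmentation submodule of `Γ →₀ ℝ` (finitely supported functions of total mass zero), a
conditionally negative `ψ` defines the positive semidefinite form
`⟪f, g⟫ = -½ ∑ f(γ) g(ρ) ψ(γ⁻¹ρ)`, which left translation preserves. Completing gives a real
Hilbert space with an orthogonal action of `Γ`, and `b(γ) = δ_γ - δ_1` is a cocycle with
`‖b(γ)‖² = ψ(γ)` whose values span the augmentation submodule; it vanishes on `Δ` because
`ψ(d) = ψ(1) = 0` there. Conversely, the cocycle identity gives `‖b(ρ⁻¹γ)‖ = ‖b(γ) - b(ρ)‖`, and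
`∑ cᵢ cⱼ ‖vᵢ - vⱼ‖² = -2 ‖∑ cᵢ vᵢ‖²` whenever `∑ cᵢ = 0`.
-/

open scoped RealInnerProductSpace
open Finsupp UniformSpace

noncomputable section

namespace LinearIsometryEquiv

open UniformSpace.Completion (continuous_map induction_on)

variable {𝕜 E F : Type*} [NormedField 𝕜] [SeminormedAddCommGroup E] [NormedSpace 𝕜 E]
  [SeminormedAddCommGroup F] [NormedSpace 𝕜 F]

def completion (e : E ≃ₗᵢ[𝕜] F) : Completion E ≃ₗᵢ[𝕜] Completion F where
  __ := (e : E →L[𝕜] F).completion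
  invFun := (e.symm : F →L[𝕜] E).completion
  left_inv x := by
    induction x using induction_on with
    | hp => exact isClosed_eq (continuous_map.comp continuous_map) continuous_id
    | ih a => simp
  right_inv x := by
    induction x using induction_on with
    | hp => exact isClosed_eq (continuous_map.comp continuous_map) continuous_id
    | ih a => simp
  norm_map' x := by
    induction x using induction_on with
    | hp => exact isClosed_eq (continuous_norm.comp continuous_map) continuous_norm
    | ih a => simp

@[simp]
theorem completion_apply_coe (e : E ≃ₗᵢ[𝕜] F) (a : E) : e.completion a = e a := by
  simp [completion]

def completionHom : (E ≃ₗᵢ[𝕜] E) →* (Completion E ≃ₗᵢ[𝕜] Completion E) :=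
  MonoidHom.mk' completion fun e f => by
    ext x
    induction x using induction_on with
    | hp => exact isClosed_eq continuous_map (continuous_map.comp continuous_map)
    | ih a => simp

@[simp]
theorem completionHom_apply (e : E ≃ₗᵢ[𝕜] E) : completionHom e = e.completion := rfl

end LinearIsometryEquiv

theorem UniformSpace.Completion.topologicalClosure_span_range_coe {𝕜 E ι : Type*} [NormedField 𝕜]
    [SeminormedAddCommGroup E] [NormedSpace 𝕜 E] {b : ι → E}
    (hb : Submodule.span 𝕜 (Set.range b) = ⊤) :
    (Submodule.span 𝕜 (Set.range fun i => (b i : Completion E))).topologicalClosure = ⊤ := by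
  have hmap : (Submodule.span 𝕜 (Set.range b)).map
      (Completion.toComplL : E →L[𝕜] Completion E).toLinearMap =
      Submodule.span 𝕜 (Set.range fun i => (b i : Completion E)) := by
    rw [Submodule.map_span, ← Set.range_comp]
    rfl
  rw [← Submodule.dense_iff_topologicalClosure_eq_top, ← hmap, hb, Submodule.map_top]
  exact Completion.denseRange_coe

theorem sum_sum_mul_norm_sub_sq {ι E : Type*} [Fintype ι] [SeminormedAddCommGroup E]
    [InnerProductSpace ℝ E] (v : ι → E) {c : ι → ℝ} (hc : ∑ i, c i = 0) :
    ∑ i, ∑ j, c i * c j * ‖v i - v j‖ ^ 2 = -2 * ‖∑ i, c i • v i‖ ^ 2 := by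
  have hsq : ‖∑ i, c i • v i‖ ^ 2 = ∑ i, ∑ j, c i * c j * ⟪v i, v j⟫ := by
    rw [← real_inner_self_eq_norm_sq]
    simp_rw [sum_inner, inner_sum, real_inner_smul_left, real_inner_smul_right, mul_assoc]
  have hexpand (i j : ι) : c i * c j * ‖v i - v j‖ ^ 2 =
      c j * (c i * ‖v i‖ ^ 2) + c i * (c j * ‖v j‖ ^ 2) - 2 * (c i * c j * ⟪v i, v j⟫) := by
    rw [norm_sub_sq_real]
    ring
  simp only [hexpand, Finset.sum_sub_distrib, Finset.sum_add_distrib, ← Finset.mul_sum,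
    ← Finset.sum_mul, hc, hsq]
  ring

def IsCocycle {Γ R E : Type*} [Group Γ] [Semiring R] [SeminormedAddCommGroup E] [Module R E]
    (π : Γ →* (E ≃ₗᵢ[R] E)) (b : Γ → E) : Prop :=
  ∀ γ ρ, b (γ * ρ) = b γ + π γ (b ρ)

namespace IsCocycle

section

variable {Γ R E : Type*} [Group Γ] [Semiring R] [SeminormedAddCommGroup E] [Module R E]
  {π : Γ →* (E ≃ₗᵢ[R] E)} {b : Γ → E}

theorem map_one (hb : IsCocycle π b) : b 1 = 0 := by
  simpa using hb 1 1

theorem norm_inv_mul (hb : IsCocycle π b) (γ ρ : Γ) : ‖b (ρ⁻¹ * γ)‖ = ‖b γ - b ρ‖ := by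
  rw [← (π ρ).norm_map, eq_sub_of_add_eq' (hb ρ (ρ⁻¹ * γ)).symm, mul_inv_cancel_left]

theorem norm_mul_mul {Δ : Subgroup Γ} (hb : IsCocycle π b) (hΔ : ∀ d ∈ Δ, b d = 0) {d₀ d₁ : Γ}
    (h₀ : d₀ ∈ Δ) (h₁ : d₁ ∈ Δ) (γ : Γ) : ‖b (d₀ * γ * d₁)‖ = ‖b γ‖ := by
  rw [hb, hb, hΔ d₀ h₀, hΔ d₁ h₁, map_zero, add_zero, zero_add, LinearIsometryEquiv.norm_map]

end

theorem completion {Γ 𝕜 E : Type*} [Group Γ] [NormedField 𝕜] [SeminormedAddCommGroup E]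
    [NormedSpace 𝕜 E] {π : Γ →* (E ≃ₗᵢ[𝕜] E)} {b : Γ → E} (hb : IsCocycle π b) :
    IsCocycle (LinearIsometryEquiv.completionHom.comp π) fun γ => (b γ : Completion E) :=
  fun γ ρ => by simp [hb γ ρ, Completion.coe_add]

section

variable {Γ : Type} [Group Γ] {E : Type*} [SeminormedAddCommGroup E] [InnerProductSpace ℝ E]
  {π : Γ →* (E ≃ₗᵢ[ℝ] E)} {b : Γ → E}

theorem isRealCondNegType_norm_sq (hb : IsCocycle π b) :
    IsRealCondNegType fun γ => ‖b γ‖ ^ 2 := by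
  refine ⟨by simp [hb.map_one], fun γ => ?_, fun n _ γ c hc => ?_⟩
  · dsimp only
    rw [← mul_one γ⁻¹, hb.norm_inv_mul, hb.map_one, zero_sub, norm_neg]
  · have hdist (i j : Fin n) : ‖b ((γ i)⁻¹ * γ j)‖ ^ 2 = ‖b (γ i) - b (γ j)‖ ^ 2 := by
      rw [hb.norm_inv_mul, norm_sub_rev]
    simp only [hdist, sum_sum_mul_norm_sub_sq (fun i => b (γ i)) hc]
    nlinarith [sq_nonneg ‖∑ i, c i • b (γ i)‖]

theorem isInvariantUnder_norm_sq {Δ : Subgroup Γ} (hb : IsCocycle π b) (hΔ : ∀ d ∈ Δ, b d = 0) :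
    IsInvariantUnder Δ fun γ => ‖b γ‖ ^ 2 :=
  fun _ h₀ _ h₁ γ => by simp only [hb.norm_mul_mul hΔ h₀ h₁]

end

end IsCocycle

def augmentationSubmodule (α : Type*) : Submodule ℝ (α →₀ ℝ) :=
  LinearMap.ker (linearCombination ℝ fun _ => (1 : ℝ))

theorem mem_augmentationSubmodule {α : Type*} {f : α →₀ ℝ} :
    f ∈ augmentationSubmodule α ↔ ∑ a ∈ f.support, f a = 0 := by
  simp [augmentationSubmodule, linearCombination_apply, Finsupp.sum]

theorem single_sub_single_mem_augmentationSubmodule {α : Type*} (a b : α) :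
    single a 1 - single b 1 ∈ augmentationSubmodule α := by
  simp [augmentationSubmodule]

theorem map_domLCongr_augmentationSubmodule {α β : Type*} (e : α ≃ β) :
    (augmentationSubmodule α).map (Finsupp.domLCongr e : (α →₀ ℝ) ≃ₗ[ℝ] (β →₀ ℝ)).toLinearMap =
      augmentationSubmodule β := by
  have h : (linearCombination ℝ fun _ => (1 : ℝ)).comp
      (Finsupp.domLCongr e.symm : (β →₀ ℝ) ≃ₗ[ℝ] (α →₀ ℝ)).toLinearMap =
      linearCombination ℝ fun _ => (1 : ℝ) :=
    lhom_ext fun _ _ => by simp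
  rw [augmentationSubmodule, augmentationSubmodule, Submodule.map_equiv_eq_comap_symm,
    ← LinearMap.ker_comp, domLCongr_symm, h]

theorem span_single_sub_single_eq_top {α : Type*} (a₀ : α) :
    Submodule.span ℝ (Set.range fun a =>
      (⟨single a 1 - single a₀ 1, single_sub_single_mem_augmentationSubmodule a a₀⟩ :
        augmentationSubmodule α)) = ⊤ := by
  refine Submodule.eq_top_iff'.mpr fun ⟨f, hf⟩ => ?_
  have hsum : (⟨f, hf⟩ : augmentationSubmodule α) = ∑ a ∈ f.support, f a •
      (⟨single a 1 - single a₀ 1, single_sub_single_mem_augmentationSubmodule a a₀⟩ :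
        augmentationSubmodule α) := by
    ext1
    simp only [Submodule.coe_sum, Submodule.coe_smul, smul_sub, Finset.sum_sub_distrib]
    rw [← Finset.sum_smul, mem_augmentationSubmodule.mp hf, zero_smul, sub_zero]
    simp only [smul_single_one]
    exact (sum_single f).symm
  rw [hsum]
  exact Submodule.sum_mem _ fun a _ => Submodule.smul_mem _ _ (Submodule.subset_span ⟨a, rfl⟩)

section CondNegForm

variable {Γ : Type*} [Group Γ]

def condNegForm (ψ : Γ → ℝ) : LinearMap.BilinForm ℝ (Γ →₀ ℝ) :=
  linearCombination ℝ fun γ => linearCombination ℝ fun ρ => -ψ (γ⁻¹ * ρ) / 2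

@[simp]
theorem condNegForm_single_single (ψ : Γ → ℝ) (γ ρ : Γ) (a c : ℝ) :
    condNegForm ψ (single γ a) (single ρ c) = a * c * (-ψ (γ⁻¹ * ρ) / 2) := by
  simp [condNegForm, mul_assoc]

theorem condNegForm_apply (ψ : Γ → ℝ) (f g : Γ →₀ ℝ) :
    condNegForm ψ f g = ∑ γ ∈ f.support, ∑ ρ ∈ g.support, f γ * g ρ * (-ψ (γ⁻¹ * ρ) / 2) := by
  simp [condNegForm, linearCombination_apply, Finsupp.sum, Finset.mul_sum, mul_assoc]

theorem condNegForm_comm {ψ : Γ → ℝ} (hψ : ∀ γ, ψ γ⁻¹ = ψ γ) (f g : Γ →₀ ℝ) :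
    condNegForm ψ f g = condNegForm ψ g f := by
  rw [condNegForm_apply, condNegForm_apply, Finset.sum_comm]
  refine Finset.sum_congr rfl fun ρ _ => Finset.sum_congr rfl fun γ _ => ?_
  rw [← hψ, mul_inv_rev, inv_inv, mul_comm (f γ)]

def leftTranslation (s : Γ) : (Γ →₀ ℝ) ≃ₗ[ℝ] (Γ →₀ ℝ) :=
  Finsupp.domLCongr (Equiv.mulLeft s)

@[simp]
theorem leftTranslation_single (s γ : Γ) (a : ℝ) :
    leftTranslation s (single γ a) = single (s * γ) a := by
  simp [leftTranslation]

theorem leftTranslation_mul_apply (s t : Γ) (f : Γ →₀ ℝ) :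
    leftTranslation (s * t) f = leftTranslation s (leftTranslation t f) := by
  induction f using Finsupp.induction_linear with
  | zero => simp
  | add f g hf hg => simp [hf, hg]
  | single γ a => simp [mul_assoc]

theorem condNegForm_leftTranslation (ψ : Γ → ℝ) (s : Γ) (f g : Γ →₀ ℝ) :
    condNegForm ψ (leftTranslation s f) (leftTranslation s g) = condNegForm ψ f g := by
  induction f using Finsupp.induction_linear with
  | zero => simp
  | add f₁ f₂ h₁ h₂ => simp [h₁, h₂]
  | single γ a =>
    induction g using Finsupp.induction_linear with
    | zero => simp
    | add g₁ g₂ h₁ h₂ => simp only [map_add, h₁, h₂]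
    | single ρ c => simp [mul_assoc]

end CondNegForm

namespace IsRealCondNegType

variable {Γ : Type} [Group Γ] {ψ : Γ → ℝ}

theorem sum_sum_le_zero (hψ : IsRealCondNegType ψ) {ι : Type*} (s : Finset ι) (γ : ι → Γ)
    {c : ι → ℝ} (hc : ∑ i ∈ s, c i = 0) :
    ∑ i ∈ s, ∑ j ∈ s, c i * c j * ψ ((γ i)⁻¹ * γ j) ≤ 0 := by
  rcases lt_or_ge s.card 2 with hcard | hcard
  · obtain hs | hs : s.card = 0 ∨ s.card = 1 := by omega
    · simp [Finset.card_eq_zero.mp hs]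
    · obtain ⟨a, rfl⟩ := Finset.card_eq_one.mp hs
      simp_all
  · have hsum (F : ι → ℝ) : ∑ i : Fin s.toList.length, F s.toList[i.1] = ∑ i ∈ s, F i := by simp
    simp only [← hsum]
    exact hψ.2.2 _ (by simpa using hcard) _ _ (by rwa [hsum])

theorem condNegForm_self_nonneg (hψ : IsRealCondNegType ψ) {f : Γ →₀ ℝ}
    (hf : f ∈ augmentationSubmodule Γ) : 0 ≤ condNegForm ψ f f := by
  have h := hψ.sum_sum_le_zero f.support id (mem_augmentationSubmodule.mp hf)
  dsimp only [id] at h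
  have h' : condNegForm ψ f f =
      -(∑ γ ∈ f.support, ∑ ρ ∈ f.support, f γ * f ρ * ψ (γ⁻¹ * ρ)) / 2 := by
    simp only [condNegForm_apply, Finset.sum_div, ← Finset.sum_neg_distrib, mul_neg, neg_div,
      mul_div_assoc]
  rw [h']
  linarith

/-- `hψ` only indexes the type, so that it can carry the inner product `condNegForm ψ`
(positive semidefinite there because `ψ` is conditionally negative). -/
def preHilbert (_hψ : IsRealCondNegType ψ) : Submodule ℝ (Γ →₀ ℝ) :=
  augmentationSubmodule Γ

instance (hψ : IsRealCondNegType ψ) : PreInnerProductSpace.Core ℝ hψ.preHilbert where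
  inner f g := condNegForm ψ f g
  conj_inner_symm f g := condNegForm_comm hψ.2.1 (g : Γ →₀ ℝ) f
  re_inner_nonneg f := hψ.condNegForm_self_nonneg f.2
  add_left f g h := by simp
  smul_left f g r := by simp

instance (hψ : IsRealCondNegType ψ) : SeminormedAddCommGroup hψ.preHilbert :=
  InnerProductSpace.Core.toSeminormedAddCommGroup (𝕜 := ℝ)

instance (hψ : IsRealCondNegType ψ) : InnerProductSpace ℝ hψ.preHilbert :=
  .ofCore _

variable (hψ : IsRealCondNegType ψ)

theorem inner_preHilbert (f g : hψ.preHilbert) : ⟪f, g⟫ = condNegForm ψ f g := rfl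

def translationEquiv (s : Γ) : hψ.preHilbert ≃ₗᵢ[ℝ] hψ.preHilbert :=
  ((leftTranslation s).ofSubmodules _ _ (map_domLCongr_augmentationSubmodule _)).isometryOfInner
    fun f g => by
      rw [inner_preHilbert, inner_preHilbert]
      exact condNegForm_leftTranslation ψ s f g

def translation : Γ →* (hψ.preHilbert ≃ₗᵢ[ℝ] hψ.preHilbert) :=
  MonoidHom.mk' hψ.translationEquiv fun s t =>
    LinearIsometryEquiv.ext fun f => Subtype.ext (leftTranslation_mul_apply s t f)

@[simp]
theorem coe_translation_apply (s : Γ) (f : hψ.preHilbert) :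
    (hψ.translation s f : Γ →₀ ℝ) = leftTranslation s f := rfl

def cocycle (γ : Γ) : hψ.preHilbert :=
  ⟨single γ 1 - single 1 1, single_sub_single_mem_augmentationSubmodule γ 1⟩

theorem isCocycle_cocycle : IsCocycle hψ.translation hψ.cocycle := fun γ ρ => by
  ext1
  simp [cocycle]

theorem norm_cocycle_sq (γ : Γ) : ‖hψ.cocycle γ‖ ^ 2 = ψ γ := by
  rw [← real_inner_self_eq_norm_sq, inner_preHilbert]
  simp [cocycle, hψ.1, hψ.2.1]
  ring

theorem span_range_cocycle : Submodule.span ℝ (Set.range hψ.cocycle) = ⊤ :=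
  span_single_sub_single_eq_top 1

end IsRealCondNegType

end

/-- ψ is a Δ-invariant real function of conditionally negative type iff
ψ(γ) = ‖b(γ)‖² for a Δ-trivial cocycle b with dense span into an orthogonal representation;
moreover, for any such data, ψ(ρ⁻¹γ) = ‖b(γ) - b(ρ)‖². -/
theorem stmt12 (Γ : Type) [Group Γ] (Δ : Subgroup Γ) (ψ : Γ → ℝ) :
    ((IsRealCondNegType ψ ∧ IsInvariantUnder Δ ψ) ↔
      ∃ (H : Type) (_ : NormedAddCommGroup H) (_ : InnerProductSpace ℝ H)
        (_ : CompleteSpace H) (π : Γ →* (H ≃ₗᵢ[ℝ] H)) (b : Γ → H),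
        (∀ γ ρ : Γ, b (γ * ρ) = b γ + π γ (b ρ)) ∧
        (∀ d ∈ Δ, b d = 0) ∧
        (Submodule.span ℝ (Set.range b)).topologicalClosure = ⊤ ∧
        ∀ γ : Γ, ψ γ = ‖b γ‖ ^ 2) ∧
    (∀ (H : Type) [NormedAddCommGroup H] [InnerProductSpace ℝ H] [CompleteSpace H]
      (π : Γ →* (H ≃ₗᵢ[ℝ] H)) (b : Γ → H),
      (∀ γ ρ : Γ, b (γ * ρ) = b γ + π γ (b ρ)) →
      (∀ d ∈ Δ, b d = 0) →
      (Submodule.span ℝ (Set.range b)).topologicalClosure = ⊤ →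
      (∀ γ : Γ, ψ γ = ‖b γ‖ ^ 2) →
      ∀ γ ρ : Γ, ψ (ρ⁻¹ * γ) = ‖b γ - b ρ‖ ^ 2) := by
  refine ⟨⟨fun ⟨hψ, hΔ⟩ => ?_, ?_⟩, ?_⟩
  · have hψΔ (d : Γ) (hd : d ∈ Δ) : ψ d = 0 := by simpa [hψ.1] using hΔ d hd 1 Δ.one_mem 1
    refine ⟨Completion hψ.preHilbert, inferInstance, inferInstance, inferInstance,
      LinearIsometryEquiv.completionHom.comp hψ.translation, fun γ => hψ.cocycle γ,
      hψ.isCocycle_cocycle.completion, fun d hd => ?_,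
      Completion.topologicalClosure_span_range_coe hψ.span_range_cocycle, fun γ => ?_⟩
    · rw [← norm_eq_zero, Completion.norm_coe, ← pow_eq_zero_iff two_ne_zero, hψ.norm_cocycle_sq,
        hψΔ d hd]
    · rw [Completion.norm_coe, hψ.norm_cocycle_sq]
  · rintro ⟨H, _, _, _, π, b, hb, hΔ, -, hψ⟩
    obtain rfl : ψ = fun γ => ‖b γ‖ ^ 2 := funext hψ
    exact ⟨IsCocycle.isRealCondNegType_norm_sq hb, IsCocycle.isInvariantUnder_norm_sq hb hΔ⟩
  · intro H _ _ _ π b hb _ _ hψ γ ρ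
    rw [hψ, IsCocycle.norm_inv_mul hb]
end
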